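/- arXiv:2403.10500 — 10 statements merged into one kernel-verified Lean document; each statement's English description precedes it below -/
import Mathlib

section
/- For every a, b, c ∈ ℤ and every integer M, the set {r ∈ R_H(a,b,c) : r ≤ M} is finite. -/
def H1 : ℤ × ℤ × ℤ → ℤ × ℤ × ℤ := fun t => (-t.1 + 1 + t.2.1 + t.2.2, t.2.1, t.2.2)
def H2 : ℤ × ℤ × ℤ → ℤ × ℤ × ℤ := fun t => (t.1, -t.2.1 + 1 + t.2.2 + t.1, t.2.2)
def H3 : ℤ × ℤ × ℤ → ℤ × ℤ × ℤ := fun t => (t.1, t.2.1, -t.2.2 + 1 + t.1 + t.2.1)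

/-- One step of the dynamics: apply one of `H1`, `H2`, `H3`. -/
def HStep (s t : ℤ × ℤ × ℤ) : Prop := t = H1 s ∨ t = H2 s ∨ t = H3 s

/-- The set of triples reachable from `(a,b,c)` by finitely many applications
of `H1`, `H2`, `H3` in any order. -/
def TH (a b c : ℤ) : Set (ℤ × ℤ × ℤ) := {t | Relation.ReflTransGen HStep (a, b, c) t}

/-- The set of integers represented as a component of a triple in `TH a b c`. -/
def RH (a b c : ℤ) : Set ℤ :=
  {r | ∃ t ∈ TH a b c, r = t.1 ∨ r = t.2.1 ∨ r = t.2.2}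

/-- The invariant quadratic form. -/
def Qf (t : ℤ × ℤ × ℤ) : ℤ :=
  t.1 ^ 2 + t.2.1 ^ 2 + t.2.2 ^ 2 - t.1 * t.2.1 - t.2.1 * t.2.2 - t.1 * t.2.2
    - t.1 - t.2.1 - t.2.2

lemma Qf_step {s t : ℤ × ℤ × ℤ} (h : HStep s t) : Qf t = Qf s := by
  rcases h with h | h | h <;> subst h <;> simp [Qf, H1, H2, H3] <;> ring

lemma Qf_reach {a b c : ℤ} {t : ℤ × ℤ × ℤ} (h : t ∈ TH a b c) : Qf t = Qf (a, b, c) := by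
  induction h with
  | refl => rfl
  | tail _ hstep ih => rw [Qf_step hstep, ih]

lemma coord_lb (t : ℤ × ℤ × ℤ) :
    -(Qf t) - 1 ≤ 3 * t.1 ∧ -(Qf t) - 1 ≤ 3 * t.2.1 ∧ -(Qf t) - 1 ≤ 3 * t.2.2 := by
  obtain ⟨x, y, z⟩ := t
  refine ⟨?_, ?_, ?_⟩ <;> simp only [Qf] <;>
    nlinarith [sq_nonneg (x - y), sq_nonneg (y - z), sq_nonneg (x - z),
      sq_nonneg (x + y - 2 * z - 1), sq_nonneg (y + z - 2 * x - 1),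
      sq_nonneg (x + z - 2 * y - 1)]

theorem finite_represented_below (a b c M : ℤ) :
    {r : ℤ | r ∈ RH a b c ∧ r ≤ M}.Finite := by
  obtain ⟨q, hq⟩ : ∃ q, q = Qf (a, b, c) := ⟨_, rfl⟩
  apply (Set.finite_Icc (-(|q| + 1)) M).subset
  rintro r ⟨⟨t, ht, hr⟩, hM⟩
  have hQ : Qf t = q := by rw [Qf_reach ht, hq]
  obtain ⟨h1, h2, h3⟩ := coord_lb t
  rw [hQ] at h1 h2 h3
  have hb : -(|q| + 1) ≤ r := by
    have habs : q ≤ |q| := le_abs_self q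
    have habs0 : 0 ≤ |q| := abs_nonneg q
    rcases hr with h | h | h <;> subst h <;> linarith
  exact ⟨hb, hM⟩
end

section
/- The braid relation H₂ ∘ H₃ ∘ H₂ = H₃ ∘ H₂ ∘ H₃ holds on ℤ × ℤ × ℤ. -/
theorem braid_relation : H2 ∘ H3 ∘ H2 = H3 ∘ H2 ∘ H3 := by
  -- both sides send `(x, y, z)` to `(x, 2x - z + 2, 2x - y + 2)`
  funext ⟨x, y, z⟩
  simp only [Function.comp_apply, H2, H3, Prod.mk.injEq, true_and]
  constructor <;> ring
end

section
/- For every a, b, c ∈ ℤ there exists h ∈ ℤ such that either R_H(a,b,c) = {r + h : r ∈ R_H(0,0,0)}, or R_H(a,b,c) = {r + h : r ∈ R_H(0,1,1)} = {r + h : r ∈ R_H(1,0,1)} = {r + h : r ∈ R_H(1,1,0)}. -/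
/-!
Every move is an involution, so `RH` is constant on the orbit; it is also invariant under
permuting the coordinates and equivariant under translating all of them. For a sorted triple
`a ≤ b < c`, `H3` reflects `c` to `a + b + 1 - c ≤ a`, which lowers the spread `c - a` by one;
if `a + 1 < b = c`, then `H2` first moves `b` to `a + 1`. Descending in this way ends at
`(h, h, h)` or `(h, h + 1, h + 1)`, the translates of `(0, 0, 0)` and `(0, 1, 1)`, and the latter
is a permutation of `(1, 0, 1)` and of `(1, 1, 0)`.
-/

instance : Std.Symm HStep where
  symm := by
    rintro ⟨x, y, z⟩ t (rfl | rfl | rfl) <;>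
      simp only [HStep, H1, H2, H3, Prod.mk.injEq, and_true, true_and] <;> omega

lemma TH_eq_of_mem {a b c a' b' c' : ℤ} (h : (a', b', c') ∈ TH a b c) :
    TH a b c = TH a' b' c' := by
  ext t
  exact ⟨(Std.Symm.symm _ _ h).trans, h.trans⟩

lemma RH_eq_of_mem {a b c a' b' c' : ℤ} (h : (a', b', c') ∈ TH a b c) :
    RH a b c = RH a' b' c' := by
  simp only [RH, TH_eq_of_mem h]

lemma RH_eq_of_hStep {a b c a' b' c' : ℤ} (h : HStep (a, b, c) (a', b', c')) :
    RH a b c = RH a' b' c' :=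
  RH_eq_of_mem (Relation.ReflTransGen.single h)

lemma image_RH_subset {f : ℤ × ℤ × ℤ → ℤ × ℤ × ℤ} {g : ℤ → ℤ}
    (hf : ∀ s t, HStep s t → HStep (f s) (f t))
    (hg : ∀ t r, r = t.1 ∨ r = t.2.1 ∨ r = t.2.2 →
      g r = (f t).1 ∨ g r = (f t).2.1 ∨ g r = (f t).2.2) (a b c : ℤ) :
    g '' RH a b c ⊆ RH (f (a, b, c)).1 (f (a, b, c)).2.1 (f (a, b, c)).2.2 := by
  rintro _ ⟨r, ⟨t, ht, hr⟩, rfl⟩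
  exact ⟨f t, Relation.ReflTransGen.lift f hf _ _ ht, hg t r hr⟩

lemma RH_swap_left_subset (a b c : ℤ) : RH a b c ⊆ RH b a c := by
  simpa using image_RH_subset (f := fun t => (t.2.1, t.1, t.2.2)) (g := id)
    (by rintro ⟨x, y, z⟩ t (rfl | rfl | rfl) <;>
      simp only [HStep, H1, H2, H3, Prod.mk.injEq, and_true, true_and] <;> omega)
    (by intro t r; dsimp only [id]; omega) a b c

lemma RH_swap_left (a b c : ℤ) : RH a b c = RH b a c :=
  (RH_swap_left_subset a b c).antisymm (RH_swap_left_subset b a c)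

lemma RH_swap_right_subset (a b c : ℤ) : RH a b c ⊆ RH a c b := by
  simpa using image_RH_subset (f := fun t => (t.1, t.2.2, t.2.1)) (g := id)
    (by rintro ⟨x, y, z⟩ t (rfl | rfl | rfl) <;>
      simp only [HStep, H1, H2, H3, Prod.mk.injEq, and_true, true_and] <;> omega)
    (by intro t r; dsimp only [id]; omega) a b c

lemma RH_swap_right (a b c : ℤ) : RH a b c = RH a c b :=
  (RH_swap_right_subset a b c).antisymm (RH_swap_right_subset a c b)

lemma image_add_RH_subset (a b c h : ℤ) :
    (· + h) '' RH a b c ⊆ RH (a + h) (b + h) (c + h) :=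
  image_RH_subset (f := fun t => (t.1 + h, t.2.1 + h, t.2.2 + h))
    (by rintro ⟨x, y, z⟩ t (rfl | rfl | rfl) <;>
      simp only [HStep, H1, H2, H3, Prod.mk.injEq, and_true, true_and] <;> omega)
    (by intro t r; dsimp only; omega) a b c

lemma RH_add (a b c h : ℤ) : RH (a + h) (b + h) (c + h) = (· + h) '' RH a b c := by
  refine Set.Subset.antisymm (fun r hr => ⟨r + -h, ?_, by simp⟩) (image_add_RH_subset a b c h)
  simpa using image_add_RH_subset (a + h) (b + h) (c + h) (-h) ⟨r, hr, rfl⟩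

lemma exists_sorted_RH_eq_of_lt {a b c : ℤ} (hab : a ≤ b) (hbc : b < c) :
    ∃ x y z, x ≤ y ∧ y ≤ z ∧ z - x < c - a ∧ RH a b c = RH x y z := by
  refine ⟨-c + 1 + a + b, a, b, by omega, hab, by omega, ?_⟩
  rw [RH_eq_of_hStep (Or.inr (Or.inr rfl)), RH_swap_right, RH_swap_left]

theorem exists_RH_eq_base_of_le {a b c : ℤ} (hab : a ≤ b) (hbc : b ≤ c) :
    ∃ h, RH a b c = RH h h h ∨ RH a b c = RH h (h + 1) (h + 1) := by
  rcases hbc.lt_or_eq with hbc | rfl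
  · obtain ⟨x, y, z, hxy, hyz, hspread, hxyz⟩ := exists_sorted_RH_eq_of_lt hab hbc
    rw [hxyz]
    exact exists_RH_eq_base_of_le hxy hyz
  rcases hab.lt_or_eq with hab | rfl
  · rcases (show b = a + 1 ∨ a + 1 < b by omega) with rfl | hb
    · exact ⟨a, Or.inr rfl⟩
    have hmove : RH a b b = RH a (a + 1) b := by
      rw [RH_eq_of_hStep (Or.inr (Or.inl rfl)), show -b + 1 + b + a = a + 1 by ring]
    obtain ⟨x, y, z, hxy, hyz, hspread, hxyz⟩ := exists_sorted_RH_eq_of_lt (lt_add_one a).le hb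
    rw [hmove, hxyz]
    exact exists_RH_eq_base_of_le hxy hyz
  · exact ⟨a, Or.inl rfl⟩
termination_by (c - a).toNat
decreasing_by all_goals omega

theorem exists_RH_eq_base (a b c : ℤ) :
    ∃ h, RH a b c = RH h h h ∨ RH a b c = RH h (h + 1) (h + 1) := by
  wlog hab : a ≤ b generalizing a b c
  · rw [RH_swap_left a b c]
    exact this b a c (by omega)
  wlog hbc : b ≤ c generalizing a b c
  · rcases le_total a c with hac | hca
    · rw [RH_swap_right a b c]
      exact this a c b hac (by omega)
    · rw [RH_swap_right a b c, RH_swap_left a c b]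
      exact this c a b hca hab
  exact exists_RH_eq_base_of_le hab hbc

theorem four_towers (a b c : ℤ) :
    ∃ h : ℤ,
      RH a b c = (fun r : ℤ => r + h) '' RH 0 0 0 ∨
        (RH a b c = (fun r : ℤ => r + h) '' RH 0 1 1 ∧
          RH a b c = (fun r : ℤ => r + h) '' RH 1 0 1 ∧
          RH a b c = (fun r : ℤ => r + h) '' RH 1 1 0) := by
  obtain ⟨h, hbase | hbase⟩ := exists_RH_eq_base a b c
  · refine ⟨h, Or.inl ?_⟩
    rw [hbase, ← RH_add, zero_add]
  · have htower : RH a b c = (· + h) '' RH 0 1 1 := by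
      rw [hbase, ← RH_add, zero_add, add_comm]
    refine ⟨h, Or.inr ⟨htower, ?_, ?_⟩⟩
    · rw [htower, RH_swap_left 1 0 1]
    · rw [htower, RH_swap_right 1 1 0, RH_swap_left 1 0 1]
end

section
/- Let a, b, c ∈ ℤ and suppose m is the least element of R_H(a,b,c). Then (m,m,m) ∈ T_H(a,b,c), or at least one of the triples (m, m+1, m+1), (m+1, m, m+1), (m+1, m+1, m) belongs to T_H(a,b,c). -/
/-- The quadratic invariant of the dynamics. -/
def IVal (t : ℤ × ℤ × ℤ) : ℤ :=
  t.1 ^ 2 + t.2.1 ^ 2 + t.2.2 ^ 2 - t.1 * t.2.1 - t.2.1 * t.2.2 - t.2.2 * t.1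
    - t.1 - t.2.1 - t.2.2

lemma IVal_step {s t : ℤ × ℤ × ℤ} (h : HStep s t) : IVal t = IVal s := by
  obtain ⟨x, y, z⟩ := s
  rcases h with h | h | h <;> subst h <;> simp only [IVal, H1, H2, H3] <;> ring

lemma IVal_const {a b c : ℤ} {t : ℤ × ℤ × ℤ} (h : t ∈ TH a b c) :
    IVal t = IVal (a, b, c) := by
  induction h with
  | refl => rfl
  | tail _ hstep ih => rw [IVal_step hstep, ih]

lemma TH_closed {a b c : ℤ} {t u : ℤ × ℤ × ℤ} (ht : t ∈ TH a b c) (h : HStep t u) :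
    u ∈ TH a b c := Relation.ReflTransGen.tail ht h

lemma key' (m k : ℤ) (t0 : ℤ × ℤ × ℤ) (h1 : m ≤ t0.1) (h2 : m ≤ t0.2.1) (h3 : m ≤ t0.2.2)
    (hc : m = t0.1 ∨ m = t0.2.1 ∨ m = t0.2.2) (hk : m ≤ k)
    (e : IVal t0 = -3 * k ∨ IVal t0 = -3 * k - 1) : k = m := by
  obtain ⟨x, y, z⟩ := t0
  simp only [IVal] at e
  simp only at h1 h2 h3 hc
  have hb : -3 * m - 1 ≤ x ^ 2 + y ^ 2 + z ^ 2 - x * y - y * z - z * x - x - y - z := by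
    rcases hc with h | h | h
    · nlinarith [sq_nonneg (y - z), sq_nonneg (y - m - 1), sq_nonneg (z - m - 1)]
    · nlinarith [sq_nonneg (x - z), sq_nonneg (x - m - 1), sq_nonneg (z - m - 1)]
    · nlinarith [sq_nonneg (x - y), sq_nonneg (x - m - 1), sq_nonneg (y - m - 1)]
  rcases e with e | e <;> omega

theorem min_triple_form (a b c m : ℤ) (hm : IsLeast (RH a b c) m) :
    (m, m, m) ∈ TH a b c ∨ (m, m + 1, m + 1) ∈ TH a b c ∨
      (m + 1, m, m + 1) ∈ TH a b c ∨ (m + 1, m + 1, m) ∈ TH a b c := by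
  classical
  obtain ⟨⟨t0, ht0, hcomp⟩, hlb⟩ := hm
  -- components of any reachable triple are ≥ m
  have hge : ∀ t ∈ TH a b c, m ≤ t.1 ∧ m ≤ t.2.1 ∧ m ≤ t.2.2 := by
    intro t ht
    exact ⟨hlb ⟨t, ht, Or.inl rfl⟩, hlb ⟨t, ht, Or.inr (Or.inl rfl)⟩,
      hlb ⟨t, ht, Or.inr (Or.inr rfl)⟩⟩
  -- a reachable triple of least coordinate sum
  have hbdd : ∃ b0 : ℤ, ∀ s : ℤ, (∃ t ∈ TH a b c, s = t.1 + t.2.1 + t.2.2) → b0 ≤ s := by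
    refine ⟨3 * m, ?_⟩
    rintro s ⟨t, ht, rfl⟩
    have := hge t ht
    omega
  have hinh : ∃ s : ℤ, ∃ t ∈ TH a b c, s = t.1 + t.2.1 + t.2.2 :=
    ⟨a + b + c, (a, b, c), Relation.ReflTransGen.refl, rfl⟩
  obtain ⟨s, ⟨u, hu, husum⟩, hsle⟩ := Int.exists_least_of_bdd hbdd hinh
  obtain ⟨x, y, z⟩ := u
  simp only at husum
  -- minimality gives the reduced inequalities
  have hx : 2 * x ≤ y + z + 1 := by
    have h := hsle ((-x + 1 + y + z) + y + z)
      ⟨H1 (x, y, z), TH_closed hu (Or.inl rfl), by simp [H1]⟩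
    omega
  have hy : 2 * y ≤ x + z + 1 := by
    have h := hsle (x + (-y + 1 + z + x) + z)
      ⟨H2 (x, y, z), TH_closed hu (Or.inr (Or.inl rfl)), by simp [H2]⟩
    omega
  have hz : 2 * z ≤ x + y + 1 := by
    have h := hsle (x + y + (-z + 1 + x + y))
      ⟨H3 (x, y, z), TH_closed hu (Or.inr (Or.inr rfl)), by simp [H3]⟩
    omega
  have hgeu := hge _ hu
  simp only at hgeu
  obtain ⟨hmx, hmy, hmz⟩ := hgeu
  have hIeq : IVal t0 = IVal (x, y, z) := by
    rw [IVal_const ht0, IVal_const hu]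
  have hcomp' : m = t0.1 ∨ m = t0.2.1 ∨ m = t0.2.2 := hcomp
  have hget0 := hge t0 ht0
  have hshape : (x = y ∧ y = z) ∨ (y = x + 1 ∧ z = x + 1) ∨ (x = y + 1 ∧ z = y + 1) ∨
      (x = z + 1 ∧ y = z + 1) := by omega
  rcases hshape with ⟨e1, e2⟩ | ⟨e1, e2⟩ | ⟨e1, e2⟩ | ⟨e1, e2⟩
  · -- (x, x, x)
    have hk : x = m := by
      refine key' m x t0 hget0.1 hget0.2.1 hget0.2.2 hcomp' hmx (Or.inl ?_)
      rw [hIeq]; simp only [IVal]; subst e1; subst e2; ring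
    subst hk; subst e1; subst e2
    exact Or.inl hu
  · -- (x, x+1, x+1)
    have hk : x = m := by
      refine key' m x t0 hget0.1 hget0.2.1 hget0.2.2 hcomp' hmx (Or.inr ?_)
      rw [hIeq]; simp only [IVal]; subst e1; subst e2; ring
    subst hk; subst e1; subst e2
    exact Or.inr (Or.inl hu)
  · -- (y+1, y, y+1)
    have hk : y = m := by
      refine key' m y t0 hget0.1 hget0.2.1 hget0.2.2 hcomp' hmy (Or.inr ?_)
      rw [hIeq]; simp only [IVal]; subst e1; subst e2; ring
    subst hk; subst e1; subst e2
    exact Or.inr (Or.inr (Or.inl hu))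
  · -- (z+1, z+1, z)
    have hk : z = m := by
      refine key' m z t0 hget0.1 hget0.2.1 hget0.2.2 hcomp' hmz (Or.inr ?_)
      rw [hIeq]; simp only [IVal]; subst e1; subst e2; ring
    subst hk; subst e1; subst e2
    exact Or.inr (Or.inr (Or.inr hu))
end

section
/- Let p ≥ 5 be a prime and let l ∈ ZMod p. The number of pairs (x,y) ∈ (ZMod p) × (ZMod p) with x² + xy + y² = l is: 2p - 1 if l = 0 and p ≡ 1 (mod 6); 1 if l = 0 and p ≡ 5 (mod 6); p - 1 if l ≠ 0 and p ≡ 1 (mod 6); and p + 1 if l ≠ 0 and p ≡ 5 (mod 6). -/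
/-!
Completing the square, 4(x² + xy + y²) = (2x + y)² + 3y², turns the equation into the conic
u² + 3v² = 4l. Counting its points fibrewise over v with the quadratic character χ of 𝔽_q gives
q + χ(-3)(q - 1) points when l = 0 and q - χ(-3) otherwise, the character sum over the fibres
being a Jacobi sum. Finally -3 is a square in 𝔽_q exactly when 𝔽_q contains a primitive cube
root of unity ω (then -3 = (2ω + 1)²), that is, when 3 ∣ q - 1.
-/

open Finset Polynomial

section

variable {F : Type*} [Field F]

lemma isSquare_neg_three_iff_exists_isPrimitiveRoot (hF : ringChar F ≠ 2) (h3 : (3 : F) ≠ 0) :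
    IsSquare (-3 : F) ↔ ∃ ω : F, IsPrimitiveRoot ω 3 := by
  have h2 : (2 : F) ≠ 0 := Ring.two_ne_zero hF
  have : NeZero ((3 : ℕ) : F) := ⟨by exact_mod_cast h3⟩
  simp only [← isRoot_cyclotomic_iff, cyclotomic_three, IsRoot.def, eval_add, eval_pow, eval_X,
    eval_one]
  constructor
  · rintro ⟨c, hc⟩
    exact ⟨(c - 1) / 2, by field_simp; linear_combination -hc⟩
  · rintro ⟨ω, hω⟩
    exact ⟨2 * ω + 1, by linear_combination -4 * hω⟩

variable [Fintype F]

lemma exists_isPrimitiveRoot_iff_dvd_card_sub_one {n : ℕ} (hn : n.Prime) :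
    (∃ ω : F, IsPrimitiveRoot ω n) ↔ n ∣ Fintype.card F - 1 := by
  constructor
  · rintro ⟨ω, hω⟩
    exact hω.dvd_of_pow_eq_one _ (FiniteField.pow_card_sub_one_eq_one ω (hω.ne_zero hn.ne_zero))
  · intro hdvd
    classical
    have : Fact n.Prime := ⟨hn⟩
    obtain ⟨g, hg⟩ : ∃ g : Fˣ, orderOf g = n :=
      exists_prime_orderOf_dvd_card n (by rwa [Fintype.card_units])
    exact ⟨g, IsPrimitiveRoot.iff_orderOf.mpr (by rw [orderOf_units, hg])⟩

variable [DecidableEq F]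

lemma quadraticChar_neg_three (hF : ringChar F ≠ 2) (h3 : (3 : F) ≠ 0) :
    quadraticChar F (-3) = if 3 ∣ Fintype.card F - 1 then 1 else -1 := by
  split_ifs with hdvd
  all_goals rw [← exists_isPrimitiveRoot_iff_dvd_card_sub_one Nat.prime_three,
    ← isSquare_neg_three_iff_exists_isPrimitiveRoot hF h3] at hdvd
  · exact (quadraticChar_one_iff_isSquare (neg_ne_zero.mpr h3)).mpr hdvd
  · exact quadraticChar_neg_one_iff_not_isSquare.mpr hdvd

lemma card_filter_sq_eq (hF : ringChar F ≠ 2) (a : F) :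
    (#{x : F | x ^ 2 = a} : ℤ) = quadraticChar F a + 1 := by
  rw [← quadraticChar_card_sqrts hF a, Set.toFinset_ofPred]

lemma sum_quadraticChar_mul_add (hF : ringChar F ≠ 2) (c : F) :
    ∑ t : F, quadraticChar F (t * (t + c)) =
      if c = 0 then (Fintype.card F : ℤ) - 1 else -1 := by
  split_ifs with hc
  · subst hc
    rw [← sum_erase_add _ _ (mem_univ 0), zero_mul, MulChar.map_zero, add_zero,
      sum_congr rfl fun t ht => by rw [add_zero, ← sq, quadraticChar_sq_one' (ne_of_mem_erase ht)]]
    simp [Nat.cast_sub Fintype.card_pos]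
  · have hJ := jacobiSum_nontrivial_inv (quadraticChar_ne_one hF)
    rw [(quadraticChar_isQuadratic F).inv, jacobiSum] at hJ
    -- substituting t = -c x leaves χ(-1) times the Jacobi sum J(χ, χ) = -χ(-1)
    calc ∑ t : F, quadraticChar F (t * (t + c))
        = ∑ x : F, quadraticChar F (-c * x * (-c * x + c)) :=
          (Equiv.sum_comp (Equiv.mulLeft₀ (-c) (neg_ne_zero.mpr hc)) _).symm
      _ = ∑ x : F, quadraticChar F (-1) * (quadraticChar F x * quadraticChar F (1 - x)) := by
          refine sum_congr rfl fun x _ => ?_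
          rw [show -c * x * (-c * x + c) = c ^ 2 * (-1 * (x * (1 - x))) by ring,
            map_mul, quadraticChar_sq_one' hc, one_mul, map_mul, map_mul]
      _ = -1 := by
          rw [← mul_sum, hJ, mul_neg, ← map_mul]; norm_num

lemma sum_quadraticChar_sq_add (hF : ringChar F ≠ 2) (c : F) :
    ∑ y : F, quadraticChar F (y ^ 2 + c) =
      if c = 0 then (Fintype.card F : ℤ) - 1 else -1 := by
  calc ∑ y : F, quadraticChar F (y ^ 2 + c)
      = ∑ t : F, ∑ y with y ^ 2 = t, quadraticChar F (y ^ 2 + c) := (sum_fiberwise _ _ _).symm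
    _ = ∑ t : F, (quadraticChar F t + 1) * quadraticChar F (t + c) := by
        refine sum_congr rfl fun t _ => ?_
        rw [sum_congr rfl fun y hy => by rw [(mem_filter.mp hy).2], sum_const, nsmul_eq_mul,
          card_filter_sq_eq hF]
    _ = ∑ t : F, quadraticChar F (t * (t + c)) + ∑ t : F, quadraticChar F (t + c) := by
        rw [← sum_add_distrib]
        exact sum_congr rfl fun t _ => by rw [map_mul]; ring
    _ = _ := by
        rw [sum_quadraticChar_mul_add hF,
          Fintype.sum_equiv (Equiv.addRight c) (fun t => quadraticChar F (t + c)) _ fun _ => rfl,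
          quadraticChar_sum_zero hF, add_zero]

lemma card_sq_sub_mul_sq_eq (hF : ringChar F ≠ 2) {a : F} (ha : a ≠ 0) (c : F) :
    (#{uv : F × F | uv.1 ^ 2 - a * uv.2 ^ 2 = c} : ℤ) =
      Fintype.card F + quadraticChar F a * if c = 0 then (Fintype.card F : ℤ) - 1 else -1 := by
  have hfiber : ∀ v : F, #{u : F | u ^ 2 - a * v ^ 2 = c} = #{u : F | u ^ 2 = a * v ^ 2 + c} :=
    fun v => by simp only [sub_eq_iff_eq_add']
  calc (#{uv : F × F | uv.1 ^ 2 - a * uv.2 ^ 2 = c} : ℤ)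
      = ∑ v : F, (#{u : F | u ^ 2 - a * v ^ 2 = c} : ℤ) := by
        simp only [card_filter, Nat.cast_sum, Fintype.sum_prod_type_right]
    _ = ∑ v : F, (quadraticChar F a * quadraticChar F (v ^ 2 + c / a) + 1) := by
        refine sum_congr rfl fun v _ => ?_
        rw [hfiber, card_filter_sq_eq hF, ← map_mul, mul_add, mul_div_cancel₀ c ha]
    _ = _ := by
        rw [sum_add_distrib, ← mul_sum, sum_quadraticChar_sq_add hF]
        simp [ha, add_comm]

lemma card_sq_add_mul_add_sq_eq (hF : ringChar F ≠ 2) (h3 : (3 : F) ≠ 0) (l : F) :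
    (#{xy : F × F | xy.1 ^ 2 + xy.1 * xy.2 + xy.2 ^ 2 = l} : ℤ) =
      Fintype.card F + quadraticChar F (-3) *
        if l = 0 then (Fintype.card F : ℤ) - 1 else -1 := by
  have h2 : (2 : F) ≠ 0 := Ring.two_ne_zero hF
  have hcompleted : #{xy : F × F | xy.1 ^ 2 + xy.1 * xy.2 + xy.2 ^ 2 = l} =
      #{uv : F × F | uv.1 ^ 2 - -3 * uv.2 ^ 2 = 4 * l} := by
    refine card_nbij' (fun xy => (2 * xy.1 + xy.2, xy.2)) (fun uv => ((uv.1 - uv.2) / 2, uv.2))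
      ?_ ?_ ?_ ?_
    · intro xy hxy
      simp only [coe_filter, mem_univ, true_and, Set.mem_ofPred_eq] at hxy ⊢
      linear_combination 4 * hxy
    · intro uv huv
      simp only [coe_filter, mem_univ, true_and, Set.mem_ofPred_eq] at huv ⊢
      field_simp
      linear_combination huv
    · intro xy _
      ext <;> simp [field]
    · intro uv _
      ext <;> simp [field]
  have h4 : (4 : F) ≠ 0 := by
    rw [show (4 : F) = 2 * 2 by norm_num]; exact mul_ne_zero h2 h2
  rw [hcompleted, card_sq_sub_mul_sq_eq hF (neg_ne_zero.mpr h3)]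
  simp only [mul_eq_zero_iff_left h4]

end

theorem count_x2_xy_y2_eq_l (p : ℕ) (hp : p.Prime) (hp5 : 5 ≤ p) (l : ZMod p) :
    (l = 0 → p % 6 = 1 →
      Nat.card {xy : ZMod p × ZMod p // xy.1 ^ 2 + xy.1 * xy.2 + xy.2 ^ 2 = l} = 2 * p - 1) ∧
    (l = 0 → p % 6 = 5 →
      Nat.card {xy : ZMod p × ZMod p // xy.1 ^ 2 + xy.1 * xy.2 + xy.2 ^ 2 = l} = 1) ∧
    (l ≠ 0 → p % 6 = 1 →
      Nat.card {xy : ZMod p × ZMod p // xy.1 ^ 2 + xy.1 * xy.2 + xy.2 ^ 2 = l} = p - 1) ∧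
    (l ≠ 0 → p % 6 = 5 →
      Nat.card {xy : ZMod p × ZMod p // xy.1 ^ 2 + xy.1 * xy.2 + xy.2 ^ 2 = l} = p + 1) := by
  have : Fact p.Prime := ⟨hp⟩
  have hF : ringChar (ZMod p) ≠ 2 := by rw [ZMod.ringChar_zmod_n]; omega
  have h3 : (3 : ZMod p) ≠ 0 := by
    intro h
    have := Nat.le_of_dvd three_pos ((ZMod.natCast_eq_zero_iff 3 p).mp (by exact_mod_cast h))
    omega
  have hcount := card_sq_add_mul_add_sq_eq hF h3 l
  rw [quadraticChar_neg_three hF h3, ZMod.card] at hcount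
  simp only [Nat.card_eq_fintype_card, Fintype.card_subtype]
  refine ⟨?_, ?_, ?_, ?_⟩ <;> intro hl hp6 <;> split_ifs at hcount <;> omega
end

section
/- Let p ≥ 5 be a prime and let l ∈ ZMod p. The number of pairs (x,y) ∈ (ZMod p) × (ZMod p) with x² + y² + xy - x - y = l is: 2p - 1 if 3l + 1 = 0 in ZMod p and p ≡ 1 (mod 6); 1 if 3l + 1 = 0 and p ≡ 5 (mod 6); p - 1 if 3l + 1 ≠ 0 and p ≡ 1 (mod 6); and p + 1 if 3l + 1 ≠ 0 and p ≡ 5 (mod 6). -/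
/-!
Read as a quadratic in `y`, the equation has `1 + χ(Δ(x))` solutions over each `x`, where `χ` is
the quadratic character and `Δ(x) = -3x² + 2x + 1 + 4l` is the discriminant. Summed over the values
of a quadratic polynomial `ax² + bx + c`, `χ` gives `χ(a)(q - 1)` or `-χ(a)` according as the
discriminant vanishes or not (after completing the square this is a Jacobi sum); the discriminant
of `Δ` is `16(3l + 1)`. Finally `-3 = (2ζ + 1)²` for a root `ζ` of `ζ² + ζ + 1`, so `-3` is a
square iff `𝔽_qˣ` has an element of order `3`, i.e. iff `q ≡ 1 (mod 3)`.
-/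

open Finset

namespace FiniteField

variable {F : Type*} [Field F] [Fintype F] [DecidableEq F]

theorem exists_sq_add_self_add_one_eq_zero_iff (h3 : (3 : F) ≠ 0) :
    (∃ ζ : F, ζ ^ 2 + ζ + 1 = 0) ↔ Fintype.card F % 3 = 1 := by
  have : Fact (Nat.Prime 3) := ⟨Nat.prime_three⟩
  have hcard : 3 ∣ Fintype.card Fˣ ↔ Fintype.card F % 3 = 1 := by
    rw [Fintype.card_units]
    have := Fintype.card_pos (α := F)
    omega
  rw [← hcard]
  constructor
  · rintro ⟨ζ, hζ⟩
    have hζ0 : ζ ≠ 0 := by rintro rfl; norm_num at hζ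
    have hζ1 : ζ ≠ 1 := by rintro rfl; exact h3 (by linear_combination hζ)
    have hu : orderOf (Units.mk0 ζ hζ0) = 3 := by
      refine orderOf_eq_prime (Units.ext ?_) (by simpa [Units.ext_iff] using hζ1)
      rw [Units.val_pow_eq_pow_val, Units.val_mk0, Units.val_one]
      linear_combination (ζ - 1) * hζ
    exact hu ▸ orderOf_dvd_card
  · intro hdvd
    obtain ⟨u, hu⟩ := exists_prime_orderOf_dvd_card 3 hdvd
    have hu3 : (u : F) ^ 3 = 1 := by
      rw [← Units.val_pow_eq_pow_val, ← hu, pow_orderOf_eq_one, Units.val_one]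
    have hu1 : (u : F) - 1 ≠ 0 := by
      rw [sub_ne_zero, Ne, Units.val_eq_one]
      rintro rfl
      simp at hu
    exact ⟨u, (mul_eq_zero.mp (by linear_combination hu3)).resolve_left hu1⟩

theorem isSquare_neg_three_iff (h2 : (2 : F) ≠ 0) (h3 : (3 : F) ≠ 0) :
    IsSquare (-3 : F) ↔ Fintype.card F % 3 = 1 := by
  rw [← exists_sq_add_self_add_one_eq_zero_iff h3]
  constructor
  · rintro ⟨s, hs⟩
    exact ⟨(s - 1) / 2, by field_simp; linear_combination -hs⟩
  · rintro ⟨ζ, hζ⟩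
    exact ⟨2 * ζ + 1, by linear_combination -4 * hζ⟩

theorem card_quadratic_roots (hF : ringChar F ≠ 2) {a : F} (ha : a ≠ 0) (b c : F) :
    (Nat.card {x : F // a * (x * x) + b * x + c = 0} : ℤ) =
      quadraticChar F (discrim a b c) + 1 := by
  have : NeZero (2 : F) := ⟨Ring.two_ne_zero hF⟩
  let e : F ≃ F :=
    (Equiv.mulLeft₀ (2 * a) (mul_ne_zero two_ne_zero ha)).trans (Equiv.addRight b)
  have hroots : {x : F // a * (x * x) + b * x + c = 0} ≃ {y : F // y ^ 2 = discrim a b c} :=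
    e.subtypeEquiv fun x => (quadratic_eq_zero_iff_discrim_eq_sq ha x).trans eq_comm
  rw [Nat.card_congr hroots, ← quadraticChar_card_sqrts hF, Nat.card_eq_fintype_card,
    Set.toFinset_card]
  rfl

theorem sum_comp_sq (hF : ringChar F ≠ 2) (f : F → ℤ) :
    ∑ y, f (y ^ 2) = ∑ a, (quadraticChar F a + 1) * f a := by
  rw [← sum_fiberwise' univ (fun y : F => y ^ 2) f]
  refine sum_congr rfl fun a _ => ?_
  rw [sum_const, nsmul_eq_mul, ← quadraticChar_card_sqrts hF a]
  congr 3
  ext y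
  simp

theorem sum_quadraticChar_mul_sub (hF : ringChar F ≠ 2) {d : F} (hd : d ≠ 0) :
    ∑ a, quadraticChar F a * quadraticChar F (a - d) = -1 := by
  set χ := quadraticChar F
  have hjac : ∑ t, χ t * χ (1 - t) = -χ (-1) := by
    have := jacobiSum_nontrivial_inv (quadraticChar_ne_one hF) (R := ℤ)
    rwa [(quadraticChar_isQuadratic F).inv] at this
  have hterm (t : F) : χ (d * t) * χ (d * t - d) = χ (-1) * (χ t * χ (1 - t)) := by
    rw [show d * t - d = -1 * d * (1 - t) by ring, map_mul, map_mul, map_mul]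
    linear_combination (χ (-1) * χ t * χ (1 - t)) * quadraticChar_sq_one hd
  rw [← Equiv.sum_comp (Equiv.mulLeft₀ d hd)]
  simp only [Equiv.mulLeft₀_apply, hterm, ← mul_sum, hjac]
  linear_combination -quadraticChar_sq_one (neg_ne_zero.2 one_ne_zero : (-1 : F) ≠ 0)

theorem sum_quadraticChar_sq_sub (hF : ringChar F ≠ 2) (d : F) :
    ∑ y, quadraticChar F (y ^ 2 - d) = if d = 0 then (Fintype.card F : ℤ) - 1 else -1 := by
  split_ifs with hd
  · have hsq (y : F) : quadraticChar F (y ^ 2 - 0) = 1 - if y = 0 then 1 else 0 := by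
      split_ifs with hy
      · simp [hy]
      · rw [sub_zero, quadraticChar_sq_one' hy, sub_zero]
    rw [hd]
    simp only [hsq, sum_sub_distrib, sum_const, card_univ, nsmul_eq_mul, mul_one, sum_ite_eq',
      mem_univ, if_true]
  · have hshift : ∑ a, quadraticChar F (a - d) = 0 :=
      (Equiv.sum_comp (Equiv.subRight d) (quadraticChar F)).trans (quadraticChar_sum_zero hF)
    rw [sum_comp_sq hF fun a => quadraticChar F (a - d)]
    simp only [add_one_mul, sum_add_distrib, hshift, sum_quadraticChar_mul_sub hF hd, add_zero]

theorem sum_quadraticChar_quadratic (hF : ringChar F ≠ 2) {a : F} (ha : a ≠ 0) (b c : F) :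
    ∑ x, quadraticChar F (a * (x * x) + b * x + c) =
      quadraticChar F a * if discrim a b c = 0 then (Fintype.card F : ℤ) - 1 else -1 := by
  have h2 : (2 : F) ≠ 0 := Ring.two_ne_zero hF
  have h2a : 2 * a ≠ 0 := mul_ne_zero h2 ha
  have hform (x : F) : a * (x * x) + b * x + c =
      a * ((2 * a)⁻¹) ^ 2 * ((2 * a * x + b) ^ 2 - discrim a b c) := by
    rw [discrim]; field_simp; ring
  calc ∑ x, quadraticChar F (a * (x * x) + b * x + c)
      = ∑ x, quadraticChar F (a * ((2 * a)⁻¹) ^ 2) *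
          quadraticChar F ((2 * a * x + b) ^ 2 - discrim a b c) := by
        simp only [hform, map_mul]
    _ = quadraticChar F a * ∑ y, quadraticChar F (y ^ 2 - discrim a b c) := by
        rw [← mul_sum, map_mul, quadraticChar_sq_one' (inv_ne_zero h2a), mul_one]
        exact congrArg _ (Equiv.sum_comp ((Equiv.mulLeft₀ (2 * a) h2a).trans (Equiv.addRight b))
          fun y => quadraticChar F (y ^ 2 - discrim a b c))
    _ = _ := by rw [sum_quadraticChar_sq_sub hF]

theorem card_quadratic_in_snd (hF : ringChar F ≠ 2) {a : F} (ha : a ≠ 0) (b c : F → F) :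
    (Nat.card {xy : F × F // a * (xy.2 * xy.2) + b xy.1 * xy.2 + c xy.1 = 0} : ℤ) =
      Fintype.card F + ∑ x, quadraticChar F (discrim a (b x) (c x)) := by
  rw [Nat.card_congr (Equiv.subtypeProdEquivSigmaSubtype fun x y =>
    a * (y * y) + b x * y + c x = 0), Nat.card_sigma]
  push_cast
  simp only [card_quadratic_roots hF ha, sum_add_distrib, sum_const, card_univ, nsmul_eq_mul,
    mul_one]
  ring

theorem quadraticChar_neg_three (h2 : (2 : F) ≠ 0) (h3 : (3 : F) ≠ 0) :
    quadraticChar F (-3) = if Fintype.card F % 3 = 1 then 1 else -1 := by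
  split_ifs with h
  · exact (quadraticChar_one_iff_isSquare (neg_ne_zero.2 h3)).2
      ((isSquare_neg_three_iff h2 h3).2 h)
  · exact quadraticChar_neg_one_iff_not_isSquare.2 ((isSquare_neg_three_iff h2 h3).not.2 h)

theorem card_sq_add_sq_add_mul_sub_sub_eq (hF : ringChar F ≠ 2) (h3 : (3 : F) ≠ 0) (l : F) :
    (Nat.card {xy : F × F // xy.1 ^ 2 + xy.2 ^ 2 + xy.1 * xy.2 - xy.1 - xy.2 = l} : ℤ) =
      Fintype.card F + quadraticChar F (-3) *
        if 3 * l + 1 = 0 then (Fintype.card F : ℤ) - 1 else -1 := by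
  have hdiscrim : discrim (-3 : F) 2 (1 + 4 * l) = 0 ↔ 3 * l + 1 = 0 := by
    rw [show discrim (-3 : F) 2 (1 + 4 * l) = 2 ^ 4 * (3 * l + 1) by rw [discrim]; ring,
      mul_eq_zero, or_iff_right (pow_ne_zero 4 (Ring.two_ne_zero hF))]
  have hΔ (x : F) :
      discrim 1 (x - 1) (x ^ 2 - x - l) = -3 * (x * x) + 2 * x + (1 + 4 * l) := by
    rw [discrim]; ring
  rw [Nat.card_congr (Equiv.subtypeEquivRight fun xy => by
      constructor <;> intro h <;> linear_combination h :
      _ ≃ {xy : F × F // 1 * (xy.2 * xy.2) + (xy.1 - 1) * xy.2 + (xy.1 ^ 2 - xy.1 - l) = 0})]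
  refine (card_quadratic_in_snd hF one_ne_zero (· - 1) (fun x => x ^ 2 - x - l)).trans ?_
  simp only [hΔ, sum_quadraticChar_quadratic hF (neg_ne_zero.2 h3), hdiscrim]

end FiniteField

open FiniteField in
theorem count_x2_y2_xy_x_y_eq_l (p : ℕ) (hp : p.Prime) (hp5 : 5 ≤ p) (l : ZMod p) :
    (3 * l + 1 = 0 → p % 6 = 1 →
      Nat.card {xy : ZMod p × ZMod p //
        xy.1 ^ 2 + xy.2 ^ 2 + xy.1 * xy.2 - xy.1 - xy.2 = l} = 2 * p - 1) ∧
    (3 * l + 1 = 0 → p % 6 = 5 →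
      Nat.card {xy : ZMod p × ZMod p //
        xy.1 ^ 2 + xy.2 ^ 2 + xy.1 * xy.2 - xy.1 - xy.2 = l} = 1) ∧
    (3 * l + 1 ≠ 0 → p % 6 = 1 →
      Nat.card {xy : ZMod p × ZMod p //
        xy.1 ^ 2 + xy.2 ^ 2 + xy.1 * xy.2 - xy.1 - xy.2 = l} = p - 1) ∧
    (3 * l + 1 ≠ 0 → p % 6 = 5 →
      Nat.card {xy : ZMod p × ZMod p //
        xy.1 ^ 2 + xy.2 ^ 2 + xy.1 * xy.2 - xy.1 - xy.2 = l} = p + 1) := by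
  have : Fact p.Prime := ⟨hp⟩
  have hF : ringChar (ZMod p) ≠ 2 := by rw [ZMod.ringChar_zmod_n]; omega
  have h3 : (3 : ZMod p) ≠ 0 := by
    have : ((3 : ℕ) : ZMod p) ≠ 0 := by
      rw [Ne, ZMod.natCast_eq_zero_iff]; exact Nat.not_dvd_of_pos_of_lt three_pos (by omega)
    exact_mod_cast this
  have hcard := card_sq_add_sq_add_mul_sub_sub_eq hF h3 l
  rw [quadraticChar_neg_three (Ring.two_ne_zero hF) h3, ZMod.card] at hcard
  refine ⟨fun hl h6 => ?_, fun hl h6 => ?_, fun hl h6 => ?_, fun hl h6 => ?_⟩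
  · rw [if_pos (by omega), if_pos hl] at hcard; omega
  · rw [if_neg (by omega), if_pos hl] at hcard; omega
  · rw [if_pos (by omega), if_neg hl] at hcard; omega
  · rw [if_neg (by omega), if_neg hl] at hcard; omega
end

section
/- For all a, b, c ∈ ℤ, R_H(a,b,c) = { -(m+n-1)·a + m·b + n·c + m² + n² + mn - m - n : m, n ∈ ℤ }. -/
/-! Write `F = rhValue a b c` for the quadratic on the right-hand side. Triples of lattice points
pairwise at distance one for the norm `m² + mn + n²` are the elementary triangles of the
triangular lattice, and across such a triangle `PQU` the second difference of `F` is one: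
`F(Q + U - P) = F Q + F U - F P + 1`. So on a triple `(F P, F Q, F U)` each `Hᵢ` reflects one
vertex of the triangle across the opposite side. Since `(a, b, c)` is `F` at `(0,0), (1,0), (0,1)`,
the reachable triples are the images of the triangles reachable by reflections. Four reflections
translate a triangle by `(1, 1)` or by `(1, -2)`; these span the sublattice `3 ∣ m - n`, and every
lattice point is a vertex of a translate of the initial triangle by that sublattice. -/

open Relation

def hexNorm (v : ℤ × ℤ) : ℤ := v.1 ^ 2 + v.1 * v.2 + v.2 ^ 2

def rhValue (a b c : ℤ) (v : ℤ × ℤ) : ℤ :=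
  -(v.1 + v.2 - 1) * a + v.1 * b + v.2 * c + v.1 ^ 2 + v.2 ^ 2 + v.1 * v.2 - v.1 - v.2

abbrev LatticeTriangle : Type := (ℤ × ℤ) × (ℤ × ℤ) × (ℤ × ℤ)

namespace LatticeTriangle

def IsElementary (T : LatticeTriangle) : Prop :=
  hexNorm (T.2.1 - T.1) = 1 ∧ hexNorm (T.2.2 - T.2.1) = 1 ∧ hexNorm (T.1 - T.2.2) = 1

def rotate (T : LatticeTriangle) : LatticeTriangle := (T.2.1, T.2.2, T.1)

def reflect₁ (T : LatticeTriangle) : LatticeTriangle := (-T.1 + T.2.1 + T.2.2, T.2.1, T.2.2)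

def reflect₂ (T : LatticeTriangle) : LatticeTriangle := (T.1, -T.2.1 + T.2.2 + T.1, T.2.2)

def reflect₃ (T : LatticeTriangle) : LatticeTriangle := (T.1, T.2.1, -T.2.2 + T.1 + T.2.1)

def Step (T T' : LatticeTriangle) : Prop :=
  T' = reflect₁ T ∨ T' = reflect₂ T ∨ T' = reflect₃ T

def cell (w : ℤ × ℤ) : LatticeTriangle := (w, w + (1, 0), w + (0, 1))

def lift (a b c : ℤ) (T : LatticeTriangle) : ℤ × ℤ × ℤ :=
  (rhValue a b c T.1, rhValue a b c T.2.1, rhValue a b c T.2.2)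

theorem IsElementary.rotate {T : LatticeTriangle} (h : IsElementary T) : IsElementary T.rotate :=
  ⟨h.2.1, h.2.2, h.1⟩

theorem IsElementary.reflect₁ {T : LatticeTriangle} (h : IsElementary T) :
    IsElementary T.reflect₁ := by
  obtain ⟨h₁, h₂, h₃⟩ := h
  refine ⟨?_, h₂, ?_⟩
  · show hexNorm (T.2.1 - (-T.1 + T.2.1 + T.2.2)) = 1
    rwa [show T.2.1 - (-T.1 + T.2.1 + T.2.2) = T.1 - T.2.2 by abel]
  · show hexNorm (-T.1 + T.2.1 + T.2.2 - T.2.2) = 1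
    rwa [show -T.1 + T.2.1 + T.2.2 - T.2.2 = T.2.1 - T.1 by abel]

-- `reflect₂` and `reflect₃` are `reflect₁` conjugated by a rotation of the vertices.
theorem IsElementary.of_step {T T' : LatticeTriangle} (h : IsElementary T) (hs : Step T T') :
    IsElementary T' := by
  rcases hs with rfl | rfl | rfl
  · exact h.reflect₁
  · exact h.rotate.reflect₁.rotate.rotate
  · exact h.rotate.rotate.reflect₁.rotate

theorem IsElementary.of_reflTransGen {T T' : LatticeTriangle} (h : IsElementary T)
    (hs : ReflTransGen Step T T') : IsElementary T' := by
  induction hs with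
  | refl => exact h
  | tail _ hs ih => exact ih.of_step hs

theorem isElementary_cell (w : ℤ × ℤ) : IsElementary (cell w) := by
  refine ⟨?_, ?_, ?_⟩ <;> simp [cell, hexNorm]

theorem reflect₁_involutive : Function.Involutive reflect₁ :=
  fun T => Prod.ext (by simp only [reflect₁]; abel) rfl

theorem reflect₂_involutive : Function.Involutive reflect₂ :=
  fun T => Prod.ext rfl (Prod.ext (by simp only [reflect₂]; abel) rfl)

theorem reflect₃_involutive : Function.Involutive reflect₃ :=
  fun T => Prod.ext rfl (Prod.ext rfl (by simp only [reflect₃]; abel))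

theorem Step.symm {T T' : LatticeTriangle} (hs : Step T T') : Step T' T := by
  rcases hs with rfl | rfl | rfl
  exacts [Or.inl (reflect₁_involutive T).symm, Or.inr (Or.inl (reflect₂_involutive T).symm),
    Or.inr (Or.inr (reflect₃_involutive T).symm)]

instance : Std.Symm Step := ⟨fun _ _ => Step.symm⟩

theorem reflTransGen_cell_add_one_one (w : ℤ × ℤ) :
    ReflTransGen Step (cell w) (cell (w + (1, 1))) := by
  have h : cell (w + (1, 1)) = reflect₃ (reflect₂ (reflect₃ (reflect₁ (cell w)))) := by
    simp only [cell, reflect₁, reflect₂, reflect₃, Prod.ext_iff, Prod.fst_add, Prod.snd_add,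
      Prod.fst_neg, Prod.snd_neg]
    omega
  rw [h]
  exact .tail (.tail (.tail (.single (Or.inl rfl)) (Or.inr (Or.inr rfl))) (Or.inr (Or.inl rfl)))
    (Or.inr (Or.inr rfl))

theorem reflTransGen_cell_add_one_neg_two (w : ℤ × ℤ) :
    ReflTransGen Step (cell w) (cell (w + (1, -2))) := by
  have h : cell (w + (1, -2)) = reflect₁ (reflect₂ (reflect₁ (reflect₃ (cell w)))) := by
    simp only [cell, reflect₁, reflect₂, reflect₃, Prod.ext_iff, Prod.fst_add, Prod.snd_add,
      Prod.fst_neg, Prod.snd_neg]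
    omega
  rw [h]
  exact .tail (.tail (.tail (.single (Or.inr (Or.inr rfl))) (Or.inl rfl)) (Or.inr (Or.inl rfl)))
    (Or.inl rfl)

theorem reflTransGen_cell_of_dvd (w : ℤ × ℤ) (hw : 3 ∣ w.1 - w.2) :
    ReflTransGen Step (cell 0) (cell w) := by
  let L := AddSubgroup.closure ({(1, 1), (1, -2)} : Set (ℤ × ℤ))
  have hL : ∀ d ∈ L, ∀ v, ReflTransGen Step (cell 0) (cell (v + d)) ↔
      ReflTransGen Step (cell 0) (cell v) := by
    intro d hd
    induction hd using AddSubgroup.closure_induction with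
    | mem d hd =>
      have path : ∀ v, ReflTransGen Step (cell v) (cell (v + d)) := by
        rcases hd with rfl | rfl
        exacts [reflTransGen_cell_add_one_one, reflTransGen_cell_add_one_neg_two]
      exact fun v => ⟨fun h => h.trans (Std.Symm.symm _ _ (path v)), fun h => h.trans (path v)⟩
    | zero => simp
    | add x y _ _ hx hy => intro v; rw [← add_assoc, hy, hx]
    | neg x _ hx => intro v; rw [← hx (v + -x), neg_add_cancel_right]
  obtain ⟨j, hj⟩ := hw
  have hcomb : w = (w.1 - j) • ((1, 1) : ℤ × ℤ) + j • (1, -2) := by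
    simp only [Prod.ext_iff, Prod.fst_add, Prod.snd_add, Prod.smul_fst, Prod.smul_snd, smul_eq_mul]
    omega
  have hmem : w ∈ L := by
    rw [hcomb]
    exact add_mem (zsmul_mem (AddSubgroup.subset_closure (by simp)) _)
      (zsmul_mem (AddSubgroup.subset_closure (by simp)) _)
  simpa using (hL w hmem 0).2 .refl

theorem exists_reflTransGen_mem_vertices (v : ℤ × ℤ) :
    ∃ T, ReflTransGen Step (cell 0) T ∧ (v = T.1 ∨ v = T.2.1 ∨ v = T.2.2) := by
  have : 3 ∣ v.1 - v.2 ∨ 3 ∣ (v - (1, 0)).1 - (v - (1, 0)).2 ∨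
      3 ∣ (v - (0, 1)).1 - (v - (0, 1)).2 := by
    simp only [Prod.fst_sub, Prod.snd_sub]
    omega
  rcases this with h | h | h
  · exact ⟨_, reflTransGen_cell_of_dvd _ h, Or.inl rfl⟩
  · exact ⟨_, reflTransGen_cell_of_dvd _ h, Or.inr (Or.inl (sub_add_cancel v _).symm)⟩
  · exact ⟨_, reflTransGen_cell_of_dvd _ h, Or.inr (Or.inr (sub_add_cancel v _).symm)⟩

section lift

variable {a b c : ℤ}

theorem rhValue_reflect {P Q U : ℤ × ℤ} (h : IsElementary (P, Q, U)) :
    rhValue a b c (-P + Q + U) = -rhValue a b c P + 1 + rhValue a b c Q + rhValue a b c U := by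
  obtain ⟨h₁, h₂, h₃⟩ := h
  simp only [hexNorm, Prod.fst_sub, Prod.snd_sub] at h₁ h₂ h₃
  simp only [rhValue, Prod.fst_add, Prod.snd_add, Prod.fst_neg, Prod.snd_neg]
  linear_combination h₁ - h₂ + h₃

theorem H1_lift {T : LatticeTriangle} (h : IsElementary T) :
    H1 (lift a b c T) = lift a b c T.reflect₁ := by
  simp only [H1, lift, reflect₁, rhValue_reflect h]

theorem H2_lift {T : LatticeTriangle} (h : IsElementary T) :
    H2 (lift a b c T) = lift a b c T.reflect₂ := by
  simp only [H2, lift, reflect₂, rhValue_reflect h.rotate]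

theorem H3_lift {T : LatticeTriangle} (h : IsElementary T) :
    H3 (lift a b c T) = lift a b c T.reflect₃ := by
  simp only [H3, lift, reflect₃,
    rhValue_reflect (show IsElementary (T.2.2, T.1, T.2.1) from h.rotate.rotate)]

theorem hStep_lift_iff {T : LatticeTriangle} (h : IsElementary T) {t : ℤ × ℤ × ℤ} :
    HStep (lift a b c T) t ↔ ∃ T', Step T T' ∧ t = lift a b c T' := by
  simp only [HStep, Step, H1_lift h, H2_lift h, H3_lift h]
  constructor
  · rintro (rfl | rfl | rfl)
    exacts [⟨_, Or.inl rfl, rfl⟩, ⟨_, Or.inr (Or.inl rfl), rfl⟩, ⟨_, Or.inr (Or.inr rfl), rfl⟩]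
  · rintro ⟨T', (rfl | rfl | rfl), rfl⟩ <;> simp

theorem lift_cell_zero : lift a b c (cell 0) = (a, b, c) := by
  simp [lift, cell, rhValue]

end lift

end LatticeTriangle

open LatticeTriangle

theorem TH_eq_image_lift (a b c : ℤ) :
    TH a b c = lift a b c '' {T | ReflTransGen Step (cell 0) T} := by
  have elementary : ∀ T, ReflTransGen Step (cell 0) T → IsElementary T :=
    fun _ => (isElementary_cell 0).of_reflTransGen
  ext t
  constructor
  · intro ht
    induction ht with
    | refl => exact ⟨cell 0, .refl, lift_cell_zero⟩
    | tail _ hs ih =>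
      obtain ⟨T, hT, rfl⟩ := ih
      obtain ⟨T', hTT', rfl⟩ := (hStep_lift_iff (elementary T hT)).1 hs
      exact ⟨T', hT.tail hTT', rfl⟩
  · rintro ⟨T, hT, rfl⟩
    induction hT with
    | refl => rw [lift_cell_zero]; exact .refl
    | @tail T T' hT hs ih => exact ih.tail ((hStep_lift_iff (elementary T hT)).2 ⟨T', hs, rfl⟩)

theorem RH_eq_range (a b c : ℤ) : RH a b c = Set.range (rhValue a b c) := by
  ext r
  rw [RH, TH_eq_image_lift]
  constructor
  · rintro ⟨_, ⟨T, -, rfl⟩, rfl | rfl | rfl⟩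
    exacts [⟨_, rfl⟩, ⟨_, rfl⟩, ⟨_, rfl⟩]
  · rintro ⟨v, rfl⟩
    obtain ⟨T, hT, rfl | rfl | rfl⟩ := exists_reflTransGen_mem_vertices v
    exacts [⟨_, ⟨T, hT, rfl⟩, Or.inl rfl⟩, ⟨_, ⟨T, hT, rfl⟩, Or.inr (Or.inl rfl)⟩,
      ⟨_, ⟨T, hT, rfl⟩, Or.inr (Or.inr rfl)⟩]

theorem RH_parametrization (a b c : ℤ) :
    RH a b c =
      {w : ℤ | ∃ m n : ℤ,
        w = -(m + n - 1) * a + m * b + n * c + m ^ 2 + n ^ 2 + m * n - m - n} := by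
  rw [RH_eq_range]
  ext w
  simp only [Set.mem_range, Prod.exists, Set.mem_ofPred_eq, rhValue, eq_comm]
end

section
/- R_H(0,1,1) = { m² + mn + n² : m, n ∈ ℤ }, i.e. the set of integers represented in the network generated by the germ (0,1,1) is exactly the set of Löschian numbers. -/
/-!
Identify `ℤ × ℤ` with the Eisenstein integers, whose norm `N` is `loeschian`. For a triangle
`(p, q, r)` with sides of norm `1`, the parallelogram law gives
`N (q + r - p) = -N p + 1 + N q + N r`, so `H1` is what reflecting `p` across the side `qr` does
to the norms of the vertices, and likewise for `H2`, `H3`. Since `(0, 1, 1)` is the norm triple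
of the triangle `(0, (1, 0), (0, 1))`, the triples in `T_H(0, 1, 1)` are the norm triples of the
triangles reached from it by such reflections; in particular their entries are Löschian.
Conversely, four reflections translate that triangle by `(1, 1)` or by `(2, -1)`, which span the
sublattice `3 ∣ x - y`, so every lattice point is a vertex of a reachable triangle.
-/

open Relation

def loeschian (x : ℤ × ℤ) : ℤ := x.1 ^ 2 + x.1 * x.2 + x.2 ^ 2

lemma loeschian_sub_comm (x y : ℤ × ℤ) : loeschian (x - y) = loeschian (y - x) := by
  simp only [loeschian, Prod.fst_sub, Prod.snd_sub]; ring

lemma loeschian_add_sub (p q r : ℤ × ℤ) :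
    loeschian (q + r - p) = -loeschian p + loeschian (q - p) + loeschian (r - p)
      - loeschian (r - q) + loeschian q + loeschian r := by
  simp only [loeschian, Prod.fst_add, Prod.snd_add, Prod.fst_sub, Prod.snd_sub]; ring

abbrev Triangle := (ℤ × ℤ) × (ℤ × ℤ) × (ℤ × ℤ)

namespace Triangle

def normTriple : Triangle → ℤ × ℤ × ℤ
  | (p, q, r) => (loeschian p, loeschian q, loeschian r)

def IsUnitSided : Triangle → Prop
  | (p, q, r) => loeschian (q - p) = 1 ∧ loeschian (r - p) = 1 ∧ loeschian (r - q) = 1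

def reflect₁ : Triangle → Triangle
  | (p, q, r) => (q + r - p, q, r)

def reflect₂ : Triangle → Triangle
  | (p, q, r) => (p, p + r - q, r)

def reflect₃ : Triangle → Triangle
  | (p, q, r) => (p, q, p + q - r)

def Flip (T T' : Triangle) : Prop := T' = reflect₁ T ∨ T' = reflect₂ T ∨ T' = reflect₃ T

variable {T T' : Triangle}

lemma IsUnitSided.reflect₁ (h : IsUnitSided T) : IsUnitSided (reflect₁ T) := by
  obtain ⟨p, q, r⟩ := T
  obtain ⟨hqp, hrp, hrq⟩ := h
  refine ⟨?_, ?_, hrq⟩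
  · rw [show q - (q + r - p) = p - r by abel, loeschian_sub_comm, hrp]
  · rw [show r - (q + r - p) = p - q by abel, loeschian_sub_comm, hqp]

lemma IsUnitSided.reflect₂ (h : IsUnitSided T) : IsUnitSided (reflect₂ T) := by
  obtain ⟨p, q, r⟩ := T
  obtain ⟨hqp, hrp, hrq⟩ := h
  refine ⟨?_, hrp, ?_⟩
  · rw [show p + r - q - p = r - q by abel, hrq]
  · rw [show r - (p + r - q) = q - p by abel, hqp]

lemma IsUnitSided.reflect₃ (h : IsUnitSided T) : IsUnitSided (reflect₃ T) := by
  obtain ⟨p, q, r⟩ := T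
  obtain ⟨hqp, hrp, hrq⟩ := h
  refine ⟨hqp, ?_, ?_⟩
  · rw [show p + q - r - p = q - r by abel, loeschian_sub_comm, hrq]
  · rw [show p + q - r - q = p - r by abel, loeschian_sub_comm, hrp]

lemma IsUnitSided.flip (h : IsUnitSided T) (hf : Flip T T') : IsUnitSided T' := by
  rcases hf with rfl | rfl | rfl
  exacts [h.reflect₁, h.reflect₂, h.reflect₃]

lemma normTriple_reflect₁ (h : IsUnitSided T) : normTriple (reflect₁ T) = H1 (normTriple T) := by
  obtain ⟨p, q, r⟩ := T
  obtain ⟨hqp, hrp, hrq⟩ := h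
  simp only [normTriple, reflect₁, H1, loeschian_add_sub, hqp, hrp, hrq]
  ring_nf

lemma normTriple_reflect₂ (h : IsUnitSided T) : normTriple (reflect₂ T) = H2 (normTriple T) := by
  obtain ⟨p, q, r⟩ := T
  obtain ⟨hqp, hrp, hrq⟩ := h
  simp only [normTriple, reflect₂, H2, loeschian_add_sub, hrp, hrq]
  rw [loeschian_sub_comm, hqp]
  ring_nf

lemma normTriple_reflect₃ (h : IsUnitSided T) : normTriple (reflect₃ T) = H3 (normTriple T) := by
  obtain ⟨p, q, r⟩ := T
  obtain ⟨hqp, hrp, hrq⟩ := h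
  simp only [normTriple, reflect₃, H3, loeschian_add_sub, hqp]
  rw [loeschian_sub_comm, hrp, loeschian_sub_comm, hrq]
  ring_nf

lemma IsUnitSided.hStep_normTriple (h : IsUnitSided T) (hf : Flip T T') :
    HStep (normTriple T) (normTriple T') := by
  rcases hf with rfl | rfl | rfl
  exacts [.inl (normTriple_reflect₁ h), .inr (.inl (normTriple_reflect₂ h)),
    .inr (.inr (normTriple_reflect₃ h))]

lemma IsUnitSided.exists_flip_of_hStep {t : ℤ × ℤ × ℤ} (h : IsUnitSided T)
    (ht : HStep (normTriple T) t) : ∃ T', Flip T T' ∧ normTriple T' = t := by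
  rcases ht with rfl | rfl | rfl
  exacts [⟨_, .inl rfl, normTriple_reflect₁ h⟩, ⟨_, .inr (.inl rfl), normTriple_reflect₂ h⟩,
    ⟨_, .inr (.inr rfl), normTriple_reflect₃ h⟩]

lemma IsUnitSided.setOf_reflTransGen_hStep (h : IsUnitSided T) :
    {t | ReflTransGen HStep (normTriple T) t} =
      normTriple '' {T' | ReflTransGen Flip T T'} := by
  ext t
  constructor
  · intro ht
    suffices ∃ T', ReflTransGen Flip T T' ∧ IsUnitSided T' ∧ normTriple T' = t by
      obtain ⟨T', hT', -, rfl⟩ := this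
      exact ⟨T', hT', rfl⟩
    induction ht with
    | refl => exact ⟨T, .refl, h, rfl⟩
    | tail _ hstep ih =>
      obtain ⟨T', hT', hunit, rfl⟩ := ih
      obtain ⟨T'', hf, rfl⟩ := hunit.exists_flip_of_hStep hstep
      exact ⟨T'', hT'.tail hf, hunit.flip hf, rfl⟩
  · rintro ⟨T', hT', rfl⟩
    suffices IsUnitSided T' ∧ ReflTransGen HStep (normTriple T) (normTriple T') from
      this.2
    induction hT' with
    | refl => exact ⟨h, .refl⟩
    | tail _ hf ih => exact ⟨ih.1.flip hf, ih.2.tail (ih.1.hStep_normTriple hf)⟩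

instance : Std.Symm Flip where
  symm := by
    rintro ⟨p, q, r⟩ T' (rfl | rfl | rfl)
    · left; simp only [reflect₁]; congr 1; abel
    · right; left; simp only [reflect₂]; congr 2; abel
    · right; right; simp only [reflect₃]; congr 3; abel

def standard (p : ℤ × ℤ) : Triangle := (p, p + (1, 0), p + (0, 1))

lemma isUnitSided_standard (p : ℤ × ℤ) : IsUnitSided (standard p) := by
  simp only [IsUnitSided, standard, add_sub_cancel_left, add_sub_add_left_eq_sub, loeschian]
  norm_num

lemma reflTransGen_flip_standard_add_one_one (p : ℤ × ℤ) :
    ReflTransGen Flip (standard p) (standard (p + (1, 1))) := by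
  have h : reflect₂ (reflect₃ (reflect₂ (reflect₁ (standard p)))) = standard (p + (1, 1)) := by
    simp only [standard, reflect₁, reflect₂, reflect₃, Prod.mk.injEq]
    refine ⟨?_, ?_, ?_⟩ <;> ext <;>
      simp only [Prod.fst_add, Prod.snd_add, Prod.fst_sub, Prod.snd_sub] <;> ring
  rw [← h]
  exact .tail (.tail (.tail (.single (.inl rfl)) (.inr (.inl rfl))) (.inr (.inr rfl)))
    (.inr (.inl rfl))

lemma reflTransGen_flip_standard_add_two_neg_one (p : ℤ × ℤ) :
    ReflTransGen Flip (standard p) (standard (p + (2, -1))) := by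
  have h : reflect₂ (reflect₁ (reflect₃ (reflect₁ (standard p)))) = standard (p + (2, -1)) := by
    simp only [standard, reflect₁, reflect₂, reflect₃, Prod.mk.injEq]
    refine ⟨?_, ?_, ?_⟩ <;> ext <;>
      simp only [Prod.fst_add, Prod.snd_add, Prod.fst_sub, Prod.snd_sub] <;> ring
  rw [← h]
  exact .tail (.tail (.tail (.single (.inl rfl)) (.inr (.inr rfl))) (.inl rfl)) (.inr (.inl rfl))

def translations : AddSubgroup (ℤ × ℤ) where
  carrier := {v | ∀ p, ReflTransGen Flip (standard p) (standard (p + v))}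
  add_mem' {v w} hv hw p := by
    simpa only [add_assoc] using (hv p).trans (hw (p + v))
  zero_mem' p := by rw [add_zero]
  neg_mem' {v} hv p := by
    simpa only [sub_eq_add_neg, neg_add_cancel_right] using symm_of _ (hv (p - v))

lemma mem_translations_of_three_dvd {v : ℤ × ℤ} (hv : 3 ∣ v.1 - v.2) : v ∈ translations := by
  obtain ⟨b, hb⟩ := hv
  have hv : v = (v.1 - 2 * b) • (1, 1) + b • (2, -1) := by
    ext <;>
      simp only [Prod.fst_add, Prod.snd_add, Prod.smul_fst, Prod.smul_snd, smul_eq_mul] <;> linarith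
  rw [hv]
  have h₁ : ((1, 1) : ℤ × ℤ) ∈ translations := reflTransGen_flip_standard_add_one_one
  have h₂ : ((2, -1) : ℤ × ℤ) ∈ translations := reflTransGen_flip_standard_add_two_neg_one
  exact add_mem (zsmul_mem h₁ _) (zsmul_mem h₂ _)

lemma exists_reflTransGen_flip_standard_mem (x : ℤ × ℤ) :
    ∃ p, ReflTransGen Flip (standard 0) (standard p) ∧
      (x = p ∨ x = p + (1, 0) ∨ x = p + (0, 1)) := by
  suffices ∃ p ∈ translations, x = p ∨ x = p + (1, 0) ∨ x = p + (0, 1) by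
    obtain ⟨p, hp, hx⟩ := this
    exact ⟨p, by simpa only [zero_add] using hp 0, hx⟩
  have : (x.1 - x.2) % 3 = 0 ∨ (x.1 - x.2) % 3 = 1 ∨ (x.1 - x.2) % 3 = 2 := by omega
  rcases this with h | h | h
  · exact ⟨x, mem_translations_of_three_dvd (by omega), .inl rfl⟩
  · refine ⟨x - (1, 0), mem_translations_of_three_dvd ?_, .inr (.inl (by abel))⟩
    simp only [Prod.fst_sub, Prod.snd_sub]; omega
  · refine ⟨x - (0, 1), mem_translations_of_three_dvd ?_, .inr (.inr (by abel))⟩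
    simp only [Prod.fst_sub, Prod.snd_sub]; omega

end Triangle

open Triangle in
theorem RH_011_eq_loeschian :
    RH 0 1 1 = {w : ℤ | ∃ m n : ℤ, w = m ^ 2 + m * n + n ^ 2} := by
  have hTH : TH 0 1 1 = normTriple '' {T | ReflTransGen Flip (standard 0) T} :=
    (isUnitSided_standard 0).setOf_reflTransGen_hStep
  ext w
  constructor
  · rintro ⟨t, ht, hw⟩
    rw [hTH] at ht
    obtain ⟨⟨p, q, r⟩, -, rfl⟩ := ht
    rcases hw with rfl | rfl | rfl
    exacts [⟨p.1, p.2, rfl⟩, ⟨q.1, q.2, rfl⟩, ⟨r.1, r.2, rfl⟩]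
  · rintro ⟨m, n, rfl⟩
    obtain ⟨p, hp, hx⟩ := exists_reflTransGen_flip_standard_mem (m, n)
    refine ⟨normTriple (standard p), hTH ▸ ⟨standard p, hp, rfl⟩, ?_⟩
    rcases hx with h | h | h
    exacts [.inl (congrArg loeschian h), .inr (.inl (congrArg loeschian h)),
      .inr (.inr (congrArg loeschian h))]
end

section
/- Let Φ := H₁ ∘ H₂ ∘ H₁ ∘ H₃ (so Φ applies H₃ first, then H₁, then H₂, then H₁). Then for all a, c ∈ ℤ and all n ≥ 1, the n-th iterate satisfies Φ^[n](a,a,c) = ( (2n+1)a - 2nc + n(3n+1), (2n+1)a - 2nc + n(3n+1), 2na - (2n-1)c + n(3n-2) ). -/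
theorem zigzag_iterate (a c : ℤ) :
    ∀ n : ℕ, 1 ≤ n →
      (H1 ∘ H2 ∘ H1 ∘ H3)^[n] (a, a, c) =
        ((2 * (n : ℤ) + 1) * a - 2 * (n : ℤ) * c + (n : ℤ) * (3 * (n : ℤ) + 1),
          (2 * (n : ℤ) + 1) * a - 2 * (n : ℤ) * c + (n : ℤ) * (3 * (n : ℤ) + 1),
          2 * (n : ℤ) * a - (2 * (n : ℤ) - 1) * c + (n : ℤ) * (3 * (n : ℤ) - 2)) := by
  intro n
  induction n with
  | zero => intro h; omega
  | succ k ih =>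
    intro _
    rcases Nat.eq_zero_or_pos k with hk | hk
    · subst hk
      simp only [Function.iterate_succ, Function.iterate_zero, Function.comp, id, H1, H2, H3, Prod.mk.injEq]
      refine ⟨by push_cast; ring, by push_cast; ring, by push_cast; ring⟩
    · rw [Function.iterate_succ_apply', ih hk]
      simp only [Function.comp, H1, H2, H3]
      simp only [Prod.mk.injEq]
      refine ⟨by push_cast; ring, by push_cast; ring, by push_cast; ring⟩
end

section
/- For every integer c ≥ 1, the least element of R_H(0,0,c) is -⌊(c² - c + 1)/3⌋ (equivalently, -⌊(c² - c + 1)/3⌋ belongs to R_H(0,0,c) and is a lower bound for R_H(0,0,c)). -/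
/-- The quadratic invariant. -/
def Qinv (t : ℤ × ℤ × ℤ) : ℤ :=
  t.1 ^ 2 + t.2.1 ^ 2 + t.2.2 ^ 2 - t.1 * t.2.1 - t.2.1 * t.2.2 - t.2.2 * t.1
    - t.1 - t.2.1 - t.2.2

lemma inv_step {s t : ℤ × ℤ × ℤ} (h : HStep s t) : Qinv t = Qinv s := by
  rcases h with h | h | h <;> subst h <;> simp only [Qinv, H1, H2, H3] <;> ring

lemma inv_reach {a b c : ℤ} {t : ℤ × ℤ × ℤ} (h : t ∈ TH a b c) :
    Qinv t = Qinv (a, b, c) := by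
  induction h with
  | refl => rfl
  | tail _ hstep ih => rw [inv_step hstep, ih]

lemma reach_P (c : ℤ) (k : ℕ) :
    Relation.ReflTransGen HStep (0, 0, c)
      (3*(k:ℤ)^2+k-2*k*c, 3*(k:ℤ)^2+k-2*k*c, 3*(k:ℤ)^2-2*k-(2*(k:ℤ)-1)*c) := by
  induction k with
  | zero =>
      have h : ((3*((0:ℕ):ℤ)^2+((0:ℕ):ℤ)-2*((0:ℕ):ℤ)*c, 3*((0:ℕ):ℤ)^2+((0:ℕ):ℤ)-2*((0:ℕ):ℤ)*c,
          3*((0:ℕ):ℤ)^2-2*((0:ℕ):ℤ)-(2*((0:ℕ):ℤ)-1)*c) : ℤ × ℤ × ℤ)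
          = ((0 : ℤ), (0 : ℤ), c) := by norm_num
      rw [h]
  | succ k ih =>
      have s1 := Relation.ReflTransGen.tail ih (Or.inr (Or.inr rfl))
      have s2 := Relation.ReflTransGen.tail s1 (Or.inl rfl)
      have s3 := Relation.ReflTransGen.tail s2 (Or.inr (Or.inl rfl))
      have s4 := Relation.ReflTransGen.tail s3 (Or.inl rfl)
      have h : ((3*((k+1:ℕ):ℤ)^2+((k+1:ℕ):ℤ)-2*((k+1:ℕ):ℤ)*c, 3*((k+1:ℕ):ℤ)^2+((k+1:ℕ):ℤ)-2*((k+1:ℕ):ℤ)*c,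
            3*((k+1:ℕ):ℤ)^2-2*((k+1:ℕ):ℤ)-(2*((k+1:ℕ):ℤ)-1)*c) : ℤ × ℤ × ℤ)
          = H1 (H2 (H1 (H3 (3*(k:ℤ)^2+(k:ℤ)-2*(k:ℤ)*c, 3*(k:ℤ)^2+(k:ℤ)-2*(k:ℤ)*c,
              3*(k:ℤ)^2-2*(k:ℤ)-(2*(k:ℤ)-1)*c)))) := by
        simp only [H1, H2, H3, Prod.ext_iff]
        push_cast
        refine ⟨by ring, by ring, by ring⟩
      rw [h]
      exact s4

theorem min_weight_00c (c : ℤ) (hc : 1 ≤ c) :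
    IsLeast (RH 0 0 c) (-((c ^ 2 - c + 1) / 3)) := by
  constructor
  · -- membership
    obtain ⟨j, hj⟩ : ∃ j, c = 3*j ∨ c = 3*j+1 ∨ c = 3*j+2 := ⟨c/3, by omega⟩
    rcases hj with h | h | h
    · have hj0 : (0:ℤ) ≤ j := by omega
      obtain ⟨k, rfl⟩ := Int.eq_ofNat_of_zero_le hj0
      have hm : (c^2 - c + 1)/3 = 3*(k:ℤ)^2 - k := by
        rw [show c^2 - c + 1 = 1 + (3*(k:ℤ)^2-k)*3 by rw [h]; ring]
        rw [Int.add_mul_ediv_right _ _ (by norm_num : (3:ℤ) ≠ 0)]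
        norm_num
      refine ⟨_, reach_P c k, Or.inl ?_⟩
      show -((c^2-c+1)/3) = 3*(k:ℤ)^2+k-2*k*c
      rw [hm, h]; ring
    · have hj0 : (0:ℤ) ≤ j := by omega
      obtain ⟨k, rfl⟩ := Int.eq_ofNat_of_zero_le hj0
      have hm : (c^2 - c + 1)/3 = 3*(k:ℤ)^2 + k := by
        rw [show c^2 - c + 1 = 1 + (3*(k:ℤ)^2+k)*3 by rw [h]; ring]
        rw [Int.add_mul_ediv_right _ _ (by norm_num : (3:ℤ) ≠ 0)]
        norm_num
      refine ⟨_, reach_P c k, Or.inl ?_⟩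
      show -((c^2-c+1)/3) = 3*(k:ℤ)^2+k-2*k*c
      rw [hm, h]; ring
    · have hj0 : (0:ℤ) ≤ j := by omega
      obtain ⟨k, rfl⟩ := Int.eq_ofNat_of_zero_le hj0
      have hm : (c^2 - c + 1)/3 = 3*(k:ℤ)^2 + 3*k + 1 := by
        rw [show c^2 - c + 1 = (3*(k:ℤ)^2+3*k+1)*3 by rw [h]; ring]
        exact Int.mul_ediv_cancel _ (by norm_num)
      refine ⟨_, reach_P c (k+1), Or.inr (Or.inr ?_)⟩
      show -((c^2-c+1)/3) = 3*((k+1:ℕ):ℤ)^2-2*((k+1:ℕ):ℤ)-(2*((k+1:ℕ):ℤ)-1)*c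
      rw [hm, h]; push_cast; ring
  · -- lower bound
    rintro r ⟨t, ht, hcomp⟩
    have hI : Qinv t = c^2 - c := by
      rw [inv_reach ht]; simp only [Qinv]; ring
    have key : ∀ x y z : ℤ,
        x^2+y^2+z^2-x*y-y*z-z*x-x-y-z = c^2-c → -(3*x) ≤ c^2-c+1 := by
      intro x y z h
      nlinarith [sq_nonneg (x-y+1), sq_nonneg (x-z+1), sq_nonneg (y-z)]
    have h3r : -(3*r) ≤ c^2 - c + 1 := by
      obtain ⟨x, y, z⟩ := t
      simp only [Qinv] at hI
      rcases hcomp with h | h | h <;> subst h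
      · exact key _ y z (by linear_combination hI)
      · exact key _ x z (by linear_combination hI)
      · exact key _ x y (by linear_combination hI)
    have hle : -r ≤ (c^2 - c + 1) / 3 := by
      rw [Int.le_ediv_iff_mul_le (by norm_num : (0:ℤ) < 3)]
      linarith
    linarith
end
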